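/- Let R be a commutative von Neumann regular ring that is not semi-artinian, and let σ be the least ordinal with s_σ R = s_{σ+1} R (the Loewy series stabilizes). Then the quotient ring R/s_σ R is a nonzero commutative von Neumann regular ring with zero socle, and Spec(R/s_σ R) is homeomorphic to δ^σ Spec(R), which is the maximal perfect subspace of Spec(R). -/

import Mathlib

open Ordinal

/-- The socle of a commutative ring: the sum of all simple ideals. -/
def socleIdeal (A : Type*) [CommRing A] : Ideal A :=
  sSup {I : Ideal A | IsSimpleModule A I}

/-- The Loewy series of a commutative ring: `loewy A 0 = ⊥`,
`loewy A (α+1)` is the preimage of the socle of `A ⧸ loewy A α`, and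
unions are taken at limit ordinals. -/
noncomputable def loewy (A : Type*) [CommRing A] : Ordinal.{0} → Ideal A :=
  fun o => Ordinal.limitRecOn o ⊥
    (fun _ s => Ideal.comap (Ideal.Quotient.mk s) (socleIdeal (A ⧸ s)))
    (fun o _ ih => ⨆ (b : Ordinal) (h : b < o), ih b h)

/-- A ring is semi-artinian if its Loewy series reaches the whole ring. -/
def IsSemiArtinian (A : Type*) [CommRing A] : Prop :=
  ∃ α : Ordinal.{0}, loewy A α = ⊤

/-- The Cantor–Bendixson derivative of a subset: the set of its
non-isolated points in the subspace topology. -/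
def derivSet {X : Type*} [TopologicalSpace X] (s : Set X) : Set X :=
  {x ∈ s | ∀ U : Set X, IsOpen U → x ∈ U → ¬ (U ∩ s ⊆ {x})}

/-- Iterated Cantor–Bendixson derivatives of a topological space. -/
noncomputable def cbDeriv (X : Type*) [TopologicalSpace X] : Ordinal.{0} → Set X :=
  fun o => Ordinal.limitRecOn o Set.univ
    (fun _ s => derivSet s)
    (fun o _ ih => ⋂ (b : Ordinal) (h : b < o), ih b h)

/-! In a commutative von Neumann regular ring every ideal is radical, so ideals are determined by
their zero loci. A simple ideal `I` is an atom of the ideal lattice, and `I ⊓ p = ⊥` for every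
prime `p ⊉ I`; hence `V(I)ᶜ` is a single isolated point. Conversely an isolated point `p` gives the
atom `I(Spec R ∖ {p})`. So the isolated points are exactly the primes not containing the socle,
i.e. `δ Spec R = V(soc R)`. Quotients of von Neumann regular rings are von Neumann regular and
`Spec(R ⧸ I) ≅ V(I)`, so transfinite induction gives `δ^α Spec R = V(s_α R)`. At the stabilization
ordinal `σ` the quotient `R ⧸ s_σ R` has zero socle, so `δ^σ Spec R` is perfect, and a perfect
set survives every derivative. -/

lemma loewy_zero (A : Type*) [CommRing A] : loewy A 0 = ⊥ := by
  simp [loewy]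

lemma loewy_succ (A : Type*) [CommRing A] (o : Ordinal.{0}) :
    loewy A (o + 1) =
      Ideal.comap (Ideal.Quotient.mk (loewy A o)) (socleIdeal (A ⧸ loewy A o)) := by
  rw [loewy, Ordinal.limitRecOn_add_one]; rfl

lemma loewy_limit (A : Type*) [CommRing A] {o : Ordinal.{0}} (ho : Order.IsSuccLimit o) :
    loewy A o = ⨆ (b : Ordinal) (_ : b < o), loewy A b := by
  rw [loewy, Ordinal.limitRecOn_limit _ _ _ _ ho]; rfl

lemma cbDeriv_zero (X : Type*) [TopologicalSpace X] : cbDeriv X 0 = Set.univ := by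
  simp [cbDeriv]

lemma cbDeriv_succ (X : Type*) [TopologicalSpace X] (o : Ordinal.{0}) :
    cbDeriv X (o + 1) = derivSet (cbDeriv X o) := by
  rw [cbDeriv, Ordinal.limitRecOn_add_one]; rfl

lemma cbDeriv_limit (X : Type*) [TopologicalSpace X] {o : Ordinal.{0}}
    (ho : Order.IsSuccLimit o) :
    cbDeriv X o = ⋂ (b : Ordinal) (_ : b < o), cbDeriv X b := by
  rw [cbDeriv, Ordinal.limitRecOn_limit _ _ _ _ ho]; rfl

section Topology

variable {X : Type*} [TopologicalSpace X]

lemma mem_derivSet_univ_iff {x : X} : x ∈ derivSet (Set.univ : Set X) ↔ ¬ IsOpen {x} := by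
  simp only [derivSet, Set.mem_univ, Set.inter_univ, true_and, Set.mem_ofPred_eq]
  refine ⟨fun h hx => h _ hx rfl subset_rfl, fun h U hU hxU hUx => h ?_⟩
  rwa [← hUx.antisymm (Set.singleton_subset_iff.2 hxU)]

lemma derivSet_mono {s t : Set X} (h : s ⊆ t) : derivSet s ⊆ derivSet t :=
  fun _ ⟨hxs, hx⟩ =>
    ⟨h hxs, fun U hU hxU hsub => hx U hU hxU fun _ hz => hsub ⟨hz.1, h hz.2⟩⟩

lemma subset_cbDeriv_of_derivSet_eq {t : Set X} (ht : derivSet t = t) (α : Ordinal.{0}) :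
    t ⊆ cbDeriv X α := by
  induction α using Ordinal.limitRecOn with
  | zero => rw [cbDeriv_zero]; exact Set.subset_univ t
  | add_one o ih => rw [cbDeriv_succ, ← ht]; exact derivSet_mono ih
  | limit o ho ih =>
    rw [cbDeriv_limit _ ho]
    exact Set.subset_iInter₂ ih

lemma Topology.IsEmbedding.image_derivSet_univ {Y : Type*} [TopologicalSpace Y] {e : X → Y}
    (he : IsEmbedding e) : e '' derivSet Set.univ = derivSet (Set.range e) := by
  ext y
  constructor
  · rintro ⟨a, ⟨-, ha⟩, rfl⟩
    refine ⟨⟨a, rfl⟩, fun U hU hyU hsub =>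
      ha (e ⁻¹' U) (hU.preimage he.continuous) hyU fun b hb => ?_⟩
    exact he.injective (hsub ⟨hb.1, b, rfl⟩)
  · rintro ⟨⟨a, rfl⟩, hy⟩
    refine ⟨a, ⟨Set.mem_univ a, fun V hV haV hsub => ?_⟩, rfl⟩
    obtain ⟨U, hU, rfl⟩ := he.isOpen_iff.mp hV
    refine hy U hU haV ?_
    rintro _ ⟨hzU, b, rfl⟩
    rw [Set.mem_singleton_iff, hsub ⟨hzU, Set.mem_univ b⟩]

end Topology

section VonNeumannRegular

variable {A : Type*} [CommRing A]

lemma Function.Surjective.vonNeumannRegular {B : Type*} [CommRing B] {f : A →+* B}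
    (hf : Function.Surjective f) (hA : ∀ a : A, ∃ x, a * x * a = a) :
    ∀ b : B, ∃ y, b * y * b = b := by
  intro b
  obtain ⟨a, rfl⟩ := hf b
  obtain ⟨x, hx⟩ := hA a
  exact ⟨f x, by rw [← map_mul, ← map_mul, hx]⟩

lemma Ideal.isRadical_of_vonNeumannRegular (hA : ∀ a : A, ∃ x, a * x * a = a)
    (I : Ideal A) : I.IsRadical := by
  refine (I.isRadical_iff_pow_one_lt 2 one_lt_two).2 fun a ha => ?_
  obtain ⟨x, hx⟩ := hA a
  rw [← hx, show a * x * a = a ^ 2 * x by ring]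
  exact I.mul_mem_right x ha

end VonNeumannRegular

namespace PrimeSpectrum

variable {A : Type*} [CommRing A]

lemma eq_of_isAtom_of_not_le {I : Ideal A} (hI : IsAtom I) {p q : PrimeSpectrum A}
    (hp : ¬ I ≤ p.asIdeal) (hq : ¬ I ≤ q.asIdeal) : p = q := by
  suffices ∀ p q : PrimeSpectrum A, ¬ I ≤ p.asIdeal → ¬ I ≤ q.asIdeal → q.asIdeal ≤ p.asIdeal from
    PrimeSpectrum.ext ((this q p hq hp).antisymm (this p q hp hq))
  intro p q hp hq
  have hIq : I ⊓ q.asIdeal = ⊥ := hI.2 _ (inf_lt_left.2 hq)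
  have hmul : I * q.asIdeal ≤ p.asIdeal := (Ideal.mul_le_inf.trans hIq.le).trans bot_le
  exact (p.isPrime.mul_le.1 hmul).resolve_left hp

lemma isOpen_singleton_of_isAtom {I : Ideal A} (hI : IsAtom I) {p : PrimeSpectrum A}
    (hp : ¬ I ≤ p.asIdeal) : IsOpen {p} := by
  have : (zeroLocus (I : Set A))ᶜ = {p} :=
    Set.eq_singleton_iff_unique_mem.2 ⟨hp, fun q hq => eq_of_isAtom_of_not_le hI hq hp⟩
  exact this ▸ (isClosed_zeroLocus _).isOpen_compl

lemma exists_isAtom_not_le_of_isOpen_singleton (hA : ∀ I : Ideal A, I.IsRadical)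
    {p : PrimeSpectrum A} (hp : IsOpen {p}) : ∃ I : Ideal A, IsAtom I ∧ ¬ I ≤ p.asIdeal := by
  have hV : ∀ I J : Ideal A, zeroLocus (I : Set A) ⊆ zeroLocus J ↔ J ≤ I := fun I J => by
    rw [zeroLocus_subset_zeroLocus_iff, (hA I).radical]
  set I := vanishingIdeal ({p}ᶜ : Set (PrimeSpectrum A))
  have hI : zeroLocus (I : Set A) = {p}ᶜ := by
    rw [zeroLocus_vanishingIdeal_eq_closure, hp.isClosed_compl.closure_eq]
  have hpI : ¬ I ≤ p.asIdeal := fun h => (hI ▸ (mem_zeroLocus p I).2 h : p ∈ ({p}ᶜ : Set _)) rfl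
  refine ⟨I, ⟨fun h => hpI (h ▸ bot_le), fun J hJI => ?_⟩, hpI⟩
  have hJp : J ≤ p.asIdeal := by
    by_contra hJp
    refine hJI.not_ge ((hV J I).1 fun q hq => ?_)
    rw [hI]
    rintro rfl
    exact hJp hq
  refine le_bot_iff.1 ((hV ⊥ J).1 fun q _ => ?_)
  by_cases hqp : q = p
  · exact hqp ▸ hJp
  · exact zeroLocus_anti_mono_ideal hJI.le (hI ▸ hqp)

lemma derivSet_univ_eq_zeroLocus_socleIdeal (hA : ∀ I : Ideal A, I.IsRadical) :
    derivSet (Set.univ : Set (PrimeSpectrum A)) = zeroLocus (socleIdeal A : Set A) := by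
  ext p
  rw [mem_derivSet_univ_iff, mem_zeroLocus, SetLike.coe_subset_coe, socleIdeal, sSup_le_iff]
  constructor
  · intro hp I hI
    by_contra hIp
    exact hp (isOpen_singleton_of_isAtom (isSimpleModule_iff_isAtom.1 hI) hIp)
  · intro h hp
    obtain ⟨I, hI, hIp⟩ := exists_isAtom_not_le_of_isOpen_singleton hA hp
    exact hIp (h I (isSimpleModule_iff_isAtom.2 hI))

lemma range_comap_quotientMk (I : Ideal A) :
    Set.range (comap (Ideal.Quotient.mk I)) = zeroLocus (I : Set A) := by
  rw [range_comap_of_surjective _ _ Ideal.Quotient.mk_surjective, Ideal.mk_ker]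

lemma isEmbedding_comap_quotientMk (I : Ideal A) :
    Topology.IsEmbedding (comap (Ideal.Quotient.mk I)) :=
  (isClosedEmbedding_comap_of_surjective _ _ Ideal.Quotient.mk_surjective).isEmbedding

lemma derivSet_zeroLocus (hA : ∀ a : A, ∃ x, a * x * a = a) (I : Ideal A) :
    derivSet (zeroLocus (I : Set A)) =
      zeroLocus (Ideal.comap (Ideal.Quotient.mk I) (socleIdeal (A ⧸ I)) : Set A) := by
  have hAI := Ideal.Quotient.mk_surjective (I := I).vonNeumannRegular hA
  rw [← range_comap_quotientMk, ← (isEmbedding_comap_quotientMk I).image_derivSet_univ,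
    derivSet_univ_eq_zeroLocus_socleIdeal (Ideal.isRadical_of_vonNeumannRegular hAI),
    image_comap_zeroLocus_eq_zeroLocus_comap _ _ Ideal.Quotient.mk_surjective]

lemma cbDeriv_eq_zeroLocus_loewy (hA : ∀ a : A, ∃ x, a * x * a = a) (α : Ordinal.{0}) :
    cbDeriv (PrimeSpectrum A) α = zeroLocus (loewy A α : Set A) := by
  induction α using Ordinal.limitRecOn with
  | zero => rw [cbDeriv_zero, loewy_zero, zeroLocus_bot]
  | add_one o ih => rw [cbDeriv_succ, loewy_succ, ih, derivSet_zeroLocus hA]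
  | limit o ho ih =>
    simp only [cbDeriv_limit _ ho, loewy_limit _ ho, zeroLocus_iSup]
    exact Set.iInter₂_congr ih

end PrimeSpectrum

theorem stmt18_general (R : Type*) [CommRing R] (hR : ∀ a : R, ∃ x, a * x * a = a)
    (hns : ¬ IsSemiArtinian R) (σ : Ordinal.{0})
    (hστ : loewy R σ = loewy R (σ + 1)) :
    Nontrivial (R ⧸ loewy R σ) ∧
    (∀ a : R ⧸ loewy R σ, ∃ x, a * x * a = a) ∧
    socleIdeal (R ⧸ loewy R σ) = ⊥ ∧
    Nonempty (PrimeSpectrum (R ⧸ loewy R σ) ≃ₜ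
      (cbDeriv (PrimeSpectrum R) σ)) ∧
    derivSet (cbDeriv (PrimeSpectrum R) σ) = cbDeriv (PrimeSpectrum R) σ ∧
    ∀ t : Set (PrimeSpectrum R), derivSet t = t →
      t ⊆ cbDeriv (PrimeSpectrum R) σ := by
  have hsoc : socleIdeal (R ⧸ loewy R σ) = ⊥ := by
    apply Ideal.comap_injective_of_surjective _ Ideal.Quotient.mk_surjective
    rw [← loewy_succ, ← hστ, ← RingHom.ker_eq_comap_bot, Ideal.mk_ker]
  have hcb := PrimeSpectrum.cbDeriv_eq_zeroLocus_loewy hR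
  refine ⟨Ideal.Quotient.nontrivial_iff.2 fun h => hns ⟨σ, h⟩,
    Ideal.Quotient.mk_surjective.vonNeumannRegular hR, hsoc, ?_, ?_,
    fun t ht => subset_cbDeriv_of_derivSet_eq ht σ⟩
  · refine ⟨(PrimeSpectrum.isEmbedding_comap_quotientMk _).toHomeomorph.trans
      (Homeomorph.setCongr ?_)⟩
    rw [PrimeSpectrum.range_comap_quotientMk, hcb]
  · rw [← cbDeriv_succ, hcb, hcb, ← hστ]

/-- For a non-semi-artinian commutative von Neumann regular ring `R` with
Loewy series stabilizing first at `σ`, the quotient `R ⧸ s_σ R` is a nonzero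
von Neumann regular ring with zero socle, and its spectrum is homeomorphic
to `δ^σ Spec R`, the maximal perfect subspace of `Spec R`. -/
theorem stmt18 (R : Type*) [CommRing R] (hR : ∀ a : R, ∃ x, a * x * a = a)
    (hns : ¬ IsSemiArtinian R) (σ : Ordinal.{0})
    (hστ : loewy R σ = loewy R (σ + 1))
    (hmin : ∀ β < σ, loewy R β ≠ loewy R (β + 1)) :
    Nontrivial (R ⧸ loewy R σ) ∧
    (∀ a : R ⧸ loewy R σ, ∃ x, a * x * a = a) ∧
    socleIdeal (R ⧸ loewy R σ) = ⊥ ∧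
    Nonempty (PrimeSpectrum (R ⧸ loewy R σ) ≃ₜ
      (cbDeriv (PrimeSpectrum R) σ)) ∧
    derivSet (cbDeriv (PrimeSpectrum R) σ) = cbDeriv (PrimeSpectrum R) σ ∧
    ∀ t : Set (PrimeSpectrum R), derivSet t = t →
      t ⊆ cbDeriv (PrimeSpectrum R) σ :=
  stmt18_general R hR hns σ hστ
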